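/- arXiv:1404.6891 — 2 statements merged into one kernel-verified Lean document; each statement's English description precedes it below -/
import Mathlib

section
/- Let S be a finite set, l a natural number, and q a probability distribution on S which is a type for blocklength l. Then the i.i.d. probability under q of the type class of q is at least (l+1)^{−|S|}, i.e. Σ_{s^l ∈ T_q} q(s_1)·…·q(s_l) ≥ (l+1)^{−|S|}. -/
open Finset
open scoped Classical

/-- The empirical distribution (type) of a sequence `s ∈ S^l`:
`q(a) = |{i : s i = a}| / l`. -/
noncomputable def empDist {S : Type*} [Fintype S] [DecidableEq S] {l : ℕ}
    (s : Fin l → S) : S → ℝ :=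
  fun a => ((Finset.univ.filter fun i => s i = a).card : ℝ) / l

noncomputable def cnt {S : Type*} [Fintype S] [DecidableEq S] {l : ℕ} (s : Fin l → S) : S → ℕ :=
  fun a => (Finset.univ.filter fun i => s i = a).card

def permCompEquiv {S : Type*} [DecidableEq S] {l : ℕ} (t s : Fin l → S) :
    {σ : Equiv.Perm (Fin l) // t ∘ σ = s} ≃ ∀ a : S, {i // s i = a} ≃ {j // t j = a} where
  toFun := fun ⟨σ, hσ⟩ a =>
    { toFun := fun ⟨i, hi⟩ => ⟨σ i, by rw [← hi]; exact congrFun hσ i⟩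
      invFun := fun ⟨j, hj⟩ => ⟨σ.symm j, by
        have := congrFun hσ (σ.symm j)
        simp only [Function.comp_apply, Equiv.apply_symm_apply] at this
        rw [← this, hj]⟩
      left_inv := fun ⟨i, hi⟩ => Subtype.ext (σ.symm_apply_apply i)
      right_inv := fun ⟨j, hj⟩ => Subtype.ext (σ.apply_symm_apply j) }
  invFun := fun e =>
    ⟨{ toFun := fun i => (e (s i) ⟨i, rfl⟩).1
       invFun := fun j => ((e (t j)).symm ⟨j, rfl⟩).1
       left_inv := by
         intro i
         dsimp only
         have key : ∀ (a a' : S) (h : a = a') (j : Fin l) (hj : t j = a) (hj' : t j = a'),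
             ((e a).symm ⟨j, hj⟩).1 = ((e a').symm ⟨j, hj'⟩).1 := by
           rintro a a' rfl j hj hj'; rfl
         set x := e (s i) ⟨i, rfl⟩ with hx
         rw [key (t x.1) (s i) x.2 x.1 rfl x.2]
         have : (⟨x.1, x.2⟩ : {j // t j = s i}) = x := Subtype.ext rfl
         rw [this, Equiv.symm_apply_apply]
       right_inv := by
         intro j
         dsimp only
         have key : ∀ (a a' : S) (h : a = a') (i : Fin l) (hi : s i = a) (hi' : s i = a'),
             ((e a) ⟨i, hi⟩).1 = ((e a') ⟨i, hi'⟩).1 := by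
           rintro a a' rfl i hi hi'; rfl
         set x := (e (t j)).symm ⟨j, rfl⟩ with hx
         rw [key (s x.1) (t j) x.2 x.1 rfl x.2]
         have : (⟨x.1, x.2⟩ : {i // s i = t j}) = x := Subtype.ext rfl
         rw [this, Equiv.apply_symm_apply] },
      funext fun i => (e (s i) ⟨i, rfl⟩).2⟩
  left_inv := fun ⟨σ, hσ⟩ => Subtype.ext (Equiv.ext fun i => rfl)
  right_inv := fun e => by
    funext a
    refine Equiv.ext fun x => Subtype.ext ?_
    obtain ⟨i, hi⟩ := x
    have key : ∀ (a a' : S) (h : a = a') (i : Fin l) (hi : s i = a) (hi' : s i = a'),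
        ((e a) ⟨i, hi⟩).1 = ((e a') ⟨i, hi'⟩).1 := by
      rintro a a' rfl i hi hi'; rfl
    show (((e (s i)) ⟨i, rfl⟩ : {j // t j = s i}) : Fin l) = ((e a) ⟨i, hi⟩ : {j // t j = a})
    exact key (s i) a hi i rfl hi

lemma fact_pow_le (k c : ℕ) : k.factorial * k ^ c ≤ c.factorial * k ^ k := by
  rcases le_total c k with h | h
  · have h1 : c.factorial * k.descFactorial (k - c) = k.factorial := by
      have := Nat.factorial_mul_descFactorial (Nat.sub_le k c)
      rwa [Nat.sub_sub_self h] at this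
    calc k.factorial * k ^ c = c.factorial * k.descFactorial (k-c) * k ^ c := by rw [h1]
      _ ≤ c.factorial * k ^ (k-c) * k ^ c := by
          gcongr
          exact Nat.descFactorial_le_pow k (k-c)
      _ = c.factorial * k ^ k := by rw [mul_assoc, ← pow_add, Nat.sub_add_cancel h]
  · have h1 : k.factorial * (k+1) ^ (c - k) ≤ c.factorial := by
      have := Nat.factorial_mul_pow_le_factorial (m := k) (n := c - k)
      rwa [Nat.add_sub_cancel' h] at this
    calc k.factorial * k ^ c = k.factorial * k ^ (c - k) * k ^ k := by
          rw [mul_assoc, ← pow_add, Nat.sub_add_cancel h]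
      _ ≤ k.factorial * (k+1) ^ (c-k) * k ^ k := by gcongr <;> omega
      _ ≤ c.factorial * k ^ k := by gcongr

lemma cnt_comp_perm {S : Type*} [Fintype S] [DecidableEq S] {l : ℕ} (t : Fin l → S)
    (σ : Equiv.Perm (Fin l)) : cnt (t ∘ σ) = cnt t := by
  funext a
  unfold cnt
  apply Finset.card_bij' (fun i _ => σ i) (fun j _ => σ.symm j) <;> simp

lemma card_typeclass {S : Type*} [Fintype S] [DecidableEq S] {l : ℕ} (t : Fin l → S) :
    (univ.filter fun s : Fin l → S => cnt s = cnt t).card * ∏ a, (cnt t a).factorial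
      = l.factorial := by
  classical
  have h3 : ∀ s : Fin l → S, (univ.filter fun σ : Equiv.Perm (Fin l) => t ∘ σ = s).card
      = if cnt s = cnt t then ∏ a, (cnt t a).factorial else 0 := by
    intro s
    by_cases hc : cnt s = cnt t
    · rw [if_pos hc, ← Fintype.card_subtype]
      rw [Fintype.card_congr (permCompEquiv t s), Fintype.card_pi]
      refine Finset.prod_congr rfl fun a _ => ?_
      have h1 : Fintype.card {i // s i = a} = cnt s a := Fintype.card_subtype _
      have h2 : Fintype.card {j // t j = a} = cnt t a := Fintype.card_subtype _
      rw [Fintype.card_equiv (Fintype.equivOfCardEq (by rw [h1, h2, hc])), h1]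
      rw [congrFun hc a]
    · rw [if_neg hc, Finset.card_eq_zero, Finset.filter_eq_empty_iff]
      rintro σ - h
      exact hc (by rw [← h, cnt_comp_perm])
  have h2 : ((univ : Finset (Equiv.Perm (Fin l)))).card
      = ∑ s ∈ (univ : Finset (Fin l → S)),
          (univ.filter fun σ : Equiv.Perm (Fin l) => t ∘ σ = s).card :=
    Finset.card_eq_sum_card_fiberwise fun σ _ => Finset.mem_univ _
  rw [Finset.sum_congr rfl fun s _ => h3 s, ← Finset.sum_filter, Finset.sum_const,
    smul_eq_mul, Finset.card_univ, Fintype.card_perm, Fintype.card_fin] at h2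
  exact h2.symm

/-- The i.i.d. probability under a type `q` of the type class of `q` is at least
`(l+1)^{-|S|}`. -/
theorem type_class_prob_lower_bound {S : Type*} [Fintype S] [DecidableEq S] (l : ℕ)
    (q : S → ℝ) (hq0 : ∀ a, 0 ≤ q a) (hq1 : ∑ a, q a = 1)
    (hq : ∃ t : Fin l → S, empDist t = q) :
    (((l : ℝ) + 1) ^ (Fintype.card S))⁻¹ ≤
      ∑ s ∈ Finset.univ.filter (fun s : Fin l → S => empDist s = q), ∏ i, q (s i) := by
  classical
  obtain ⟨t, ht⟩ := hq
  have hl : l ≠ 0 := by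
    rintro rfl
    have hz : ∀ a, q a = 0 := fun a => by rw [← ht]; simp [empDist]
    rw [Finset.sum_congr rfl fun a _ => hz a, Finset.sum_const, smul_zero] at hq1
    exact one_ne_zero hq1.symm
  have hl0 : (0:ℝ) < l := by
    have : 0 < l := Nat.pos_of_ne_zero hl
    exact_mod_cast this
  set k : S → ℕ := cnt t with hk
  have hqa : ∀ a, q a = (k a : ℝ) / l := fun a => by rw [← ht]; rfl
  -- characterization of the type class
  have hiff : ∀ s : Fin l → S, empDist s = q ↔ cnt s = k := by
    intro s
    constructor
    · intro h
      funext a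
      have h2 := congrFun h a
      rw [hqa a] at h2
      have h3 : (cnt s a : ℝ) = k a := by
        simp only [empDist, div_left_inj' hl0.ne'] at h2
        exact_mod_cast h2
      exact_mod_cast h3
    · intro h
      funext a
      rw [hqa a, ← h]
      rfl
  -- counts sum to l
  have hcntsum : ∀ s : Fin l → S, ∑ a, cnt s a = l := by
    intro s
    have := Finset.card_eq_sum_card_fiberwise (f := s) (s := univ) (t := univ)
      fun i _ => Finset.mem_univ _
    rw [Finset.card_univ, Fintype.card_fin] at this
    exact this.symm
  -- product over the tuple in terms of counts
  have hprod : ∀ s : Fin l → S, ∏ i, q (s i) = ∏ a, q a ^ cnt s a := by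
    intro s
    rw [← Finset.prod_fiberwise_of_maps_to (fun i _ => Finset.mem_univ (s i)) fun i => q (s i)]
    refine Finset.prod_congr rfl fun a _ => ?_
    rw [Finset.prod_congr rfl fun i hi => by rw [(Finset.mem_filter.mp hi).2],
      Finset.prod_const]
    rfl
  -- ∏ q^c in terms of counts of t
  have hqpow : ∀ c : S → ℕ, (∑ a, c a = l) →
      ∏ a, q a ^ c a = (∏ a, (k a : ℝ) ^ c a) / (l:ℝ) ^ l := by
    intro c hc
    rw [Finset.prod_congr rfl fun a _ => by rw [hqa a, div_pow],
      Finset.prod_div_distrib, Finset.prod_pow_eq_pow_sum, hc]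
  -- the value term
  set P : (S → ℕ) → ℝ := fun c =>
    ((univ.filter fun s : Fin l → S => cnt s = c).card : ℝ) * ∏ a, q a ^ c a with hPdef
  have hP : ∀ c : S → ℕ,
      (∑ s ∈ univ.filter fun s : Fin l → S => cnt s = c, ∏ i, q (s i)) = P c := by
    intro c
    rw [Finset.sum_congr rfl fun s hs => by
        rw [hprod s, (Finset.mem_filter.mp hs).2],
      Finset.sum_const, nsmul_eq_mul]
  -- key inequality : P c ≤ P k for realizable c
  have hkey : ∀ s0 : Fin l → S, P (cnt s0) ≤ P k := by
    intro s0
    set c : S → ℕ := cnt s0 with hcdef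
    set Nc := (univ.filter fun s : Fin l → S => cnt s = c).card with hNc
    set Nk := (univ.filter fun s : Fin l → S => cnt s = k).card with hNk
    have hnat : Nc * ∏ a, (k a) ^ (c a) ≤ Nk * ∏ a, (k a) ^ (k a) := by
      have hA : Nc * ∏ a, (c a).factorial = l.factorial := card_typeclass s0
      have hB : Nk * ∏ a, (k a).factorial = l.factorial := card_typeclass t
      have hper : (∏ a, (k a).factorial) * ∏ a, (k a) ^ (c a)
          ≤ (∏ a, (c a).factorial) * ∏ a, (k a) ^ (k a) := by
        rw [← Finset.prod_mul_distrib, ← Finset.prod_mul_distrib]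
        exact Finset.prod_le_prod' fun a _ => fact_pow_le (k a) (c a)
      have hABpos : 0 < (∏ a, (c a).factorial) * ∏ a, (k a).factorial := by
        apply Nat.mul_pos <;> exact Finset.prod_pos fun a _ => Nat.factorial_pos _
      refine Nat.le_of_mul_le_mul_left ?_ hABpos
      calc (∏ a, (c a).factorial) * (∏ a, (k a).factorial) * (Nc * ∏ a, (k a) ^ (c a))
          = (Nc * ∏ a, (c a).factorial) * ((∏ a, (k a).factorial) * ∏ a, (k a) ^ (c a)) := by
            ring
        _ = l.factorial * ((∏ a, (k a).factorial) * ∏ a, (k a) ^ (c a)) := by rw [hA]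
        _ ≤ l.factorial * ((∏ a, (c a).factorial) * ∏ a, (k a) ^ (k a)) :=
            Nat.mul_le_mul_left _ hper
        _ = (Nk * ∏ a, (k a).factorial) * ((∏ a, (c a).factorial) * ∏ a, (k a) ^ (k a)) := by
            rw [hB]
        _ = (∏ a, (c a).factorial) * (∏ a, (k a).factorial) * (Nk * ∏ a, (k a) ^ (k a)) := by
            ring
    -- transfer to ℝ
    rw [hPdef]
    dsimp only
    rw [hqpow c (hcntsum s0), hqpow k (hcntsum t)]
    rw [div_eq_mul_inv, div_eq_mul_inv, ← mul_assoc, ← mul_assoc]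
    apply mul_le_mul_of_nonneg_right _ (by positivity)
    have := hnat
    calc (Nc : ℝ) * ∏ a, (k a : ℝ) ^ c a = ((Nc * ∏ a, (k a) ^ (c a) : ℕ) : ℝ) := by push_cast; ring
      _ ≤ ((Nk * ∏ a, (k a) ^ (k a) : ℕ) : ℝ) := by exact_mod_cast hnat
      _ = (Nk : ℝ) * ∏ a, (k a : ℝ) ^ k a := by push_cast; ring
  -- total sum is 1
  have hsum1 : ∑ s : Fin l → S, ∏ i, q (s i) = 1 := by
    rw [← Fintype.piFinset_univ, ← Finset.prod_univ_sum]
    simp [hq1]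
  -- partition by count vectors
  set T : Finset (S → ℕ) := univ.image (cnt : (Fin l → S) → S → ℕ) with hT
  have hpart : ∑ s : Fin l → S, ∏ i, q (s i)
      = ∑ c ∈ T, ∑ s ∈ univ.filter fun s : Fin l → S => cnt s = c, ∏ i, q (s i) :=
    (Finset.sum_fiberwise_of_maps_to (fun s _ => Finset.mem_image_of_mem _ (Finset.mem_univ s))
      _).symm
  have hone : 1 ≤ (T.card : ℝ) * P k := by
    calc (1:ℝ) = ∑ c ∈ T, ∑ s ∈ univ.filter fun s : Fin l → S => cnt s = c, ∏ i, q (s i) := by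
          rw [← hpart, hsum1]
      _ ≤ ∑ _c ∈ T, P k := by
          refine Finset.sum_le_sum fun c hc => ?_
          obtain ⟨s0, -, rfl⟩ := Finset.mem_image.mp hc
          rw [hP]
          exact hkey s0
      _ = T.card * P k := by rw [Finset.sum_const, nsmul_eq_mul]
  -- number of types bound
  have hTsub : T ⊆ Fintype.piFinset fun _ : S => Finset.range (l+1) := by
    intro c hc
    obtain ⟨s0, -, rfl⟩ := Finset.mem_image.mp hc
    rw [Fintype.mem_piFinset]
    intro a
    rw [Finset.mem_range, Nat.lt_succ_iff]
    calc cnt s0 a ≤ (univ : Finset (Fin l)).card := Finset.card_filter_le _ _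
      _ = l := by rw [Finset.card_univ, Fintype.card_fin]
  have hTcard : (T.card : ℝ) ≤ ((l:ℝ) + 1) ^ Fintype.card S := by
    have h1 : T.card ≤ (l+1) ^ Fintype.card S := by
      calc T.card ≤ (Fintype.piFinset fun _ : S => Finset.range (l+1)).card :=
            Finset.card_le_card hTsub
        _ = (l+1) ^ Fintype.card S := by
            rw [Fintype.card_piFinset]
            simp
    calc (T.card : ℝ) ≤ (((l+1) ^ Fintype.card S : ℕ) : ℝ) := by exact_mod_cast h1
      _ = ((l:ℝ) + 1) ^ Fintype.card S := by push_cast; ring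
  -- conclude
  have hPk0 : 0 ≤ P k := by
    rw [← hP]
    exact Finset.sum_nonneg fun s _ => Finset.prod_nonneg fun i _ => hq0 _
  have hfilter : (univ.filter fun s : Fin l → S => empDist s = q)
      = univ.filter fun s : Fin l → S => cnt s = k :=
    Finset.filter_congr fun s _ => hiff s
  rw [hfilter, hP]
  have hM : (0:ℝ) < ((l:ℝ) + 1) ^ Fintype.card S := by positivity
  rw [inv_eq_one_div, div_le_iff₀ hM]
  calc (1:ℝ) ≤ T.card * P k := hone
    _ ≤ (((l:ℝ) + 1) ^ Fintype.card S) * P k := by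
        apply mul_le_mul_of_nonneg_right hTcard hPk0
    _ = P k * ((l:ℝ) + 1) ^ Fintype.card S := by ring
end

section
/- Let ρ_1, …, ρ_N be density matrices indexed by (m×n)×(m×n) (bipartite density matrices on ℂ^m ⊗ ℂ^n) such that the ranges of their partial traces tr_B(ρ_1), …, tr_B(ρ_N) over the second factor are pairwise orthogonal. For each s, let P_s be the orthogonal projection onto the range of tr_B(ρ_s). Then for all s, s': (P_s ⊗ 1_n)·ρ_{s'}·(P_s ⊗ 1_n) = δ_{s s'}·ρ_{s'}, i.e. it equals ρ_{s'} when s = s' and 0 otherwise. -/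
open Finset Matrix
open scoped ComplexOrder
open scoped Kronecker

/-- The partial trace over the second tensor factor of a matrix on `ℂ^m ⊗ ℂ^n`. -/
noncomputable def ptraceB {m n : ℕ}
    (ρ : Matrix (Fin m × Fin n) (Fin m × Fin n) ℂ) : Matrix (Fin m) (Fin m) ℂ :=
  Matrix.of fun i i' => ∑ j, ρ (i, j) (i', j)

/-- If `x⋆ (tr_B ρ) x = 0` for a PSD `ρ`, then `ρ (x ⊗ e_j) = 0` for every `j`. -/
lemma key_ptrace {m n : ℕ} {ρ : Matrix (Fin m × Fin n) (Fin m × Fin n) ℂ}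
    (hpsd : ρ.PosSemidef) (x : Fin m → ℂ)
    (hx : star x ⬝ᵥ (ptraceB ρ) *ᵥ x = 0) (j : Fin n) :
    ρ *ᵥ (fun p => if p.2 = j then x p.1 else 0) = 0 := by
  set v : Fin n → (Fin m × Fin n → ℂ) := fun k p => if p.2 = k then x p.1 else 0 with hv
  have h1 : ∀ k, star (v k) ⬝ᵥ ρ *ᵥ (v k)
      = ∑ i, ∑ i', star (x i) * (ρ (i, k) (i', k) * x i') := by
    intro k
    simp only [dotProduct, mulVec, hv, Fintype.sum_prod_type, Pi.star_apply]
    rw [Finset.sum_comm]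
    simp [Finset.mul_sum, mul_ite, ite_mul, apply_ite (star : ℂ → ℂ)]
  have hsum : ∑ k, star (v k) ⬝ᵥ ρ *ᵥ (v k) = star x ⬝ᵥ (ptraceB ρ) *ᵥ x :=
    calc ∑ k, star (v k) ⬝ᵥ ρ *ᵥ (v k)
        = ∑ k, ∑ i, ∑ i', star (x i) * (ρ (i, k) (i', k) * x i') := by simp only [h1]
      _ = ∑ i, ∑ k, ∑ i', star (x i) * (ρ (i, k) (i', k) * x i') := Finset.sum_comm
      _ = ∑ i, ∑ i', ∑ k, star (x i) * (ρ (i, k) (i', k) * x i') :=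
          Finset.sum_congr rfl fun i _ => Finset.sum_comm
      _ = star x ⬝ᵥ (ptraceB ρ) *ᵥ x := by
          simp only [dotProduct, mulVec, ptraceB, Matrix.of_apply, Pi.star_apply,
            Finset.mul_sum, Finset.sum_mul]
  have hterm : ∀ k ∈ Finset.univ, (0:ℂ) ≤ star (v k) ⬝ᵥ ρ *ᵥ (v k) :=
    fun k _ => hpsd.dotProduct_mulVec_nonneg _
  have hzero : star (v j) ⬝ᵥ ρ *ᵥ (v j) = 0 :=
    (Finset.sum_eq_zero_iff_of_nonneg hterm).mp (hsum.trans hx) j (Finset.mem_univ j)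
  exact (hpsd.dotProduct_mulVec_zero_iff _).mp hzero

/-- A PSD bipartite state is absorbed by the projection onto the range of its marginal. -/
lemma absorb {m n : ℕ} {ρ : Matrix (Fin m × Fin n) (Fin m × Fin n) ℂ} (hpsd : ρ.PosSemidef)
    {P : Matrix (Fin m) (Fin m) ℂ} (hP : P.IsHermitian) (hPP : P * P = P)
    (hrange : LinearMap.range P.mulVecLin = LinearMap.range (ptraceB ρ).mulVecLin) :
    ρ * (P ⊗ₖ (1 : Matrix (Fin n) (Fin n) ℂ)) = ρ := by
  have main : ρ * ((1 : Matrix (Fin m × Fin n) (Fin m × Fin n) ℂ) - P ⊗ₖ 1) = 0 := by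
    ext a b
    obtain ⟨i, j⟩ := b
    set y : Fin m → ℂ := fun i' => (if i' = i then 1 else 0) - P i' i with hy
    have hcol : (fun p : Fin m × Fin n => ((1 : Matrix (Fin m × Fin n) (Fin m × Fin n) ℂ)
        - P ⊗ₖ (1 : Matrix (Fin n) (Fin n) ℂ)) p (i, j))
        = fun p => if p.2 = j then y p.1 else 0 := by
      funext p
      simp only [Matrix.sub_apply, Matrix.one_apply, kroneckerMap_apply, hy]
      by_cases hpj : p.2 = j <;> by_cases hpi : p.1 = i <;>
        simp [Prod.ext_iff, hpj, hpi]
    have hPy : P *ᵥ y = 0 := by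
      funext a'
      have h2 : (P * P) a' i = P a' i := by rw [hPP]
      simp only [mulVec, dotProduct, hy, mul_sub, Finset.sum_sub_distrib, mul_ite, mul_one,
        mul_zero, Finset.sum_ite_eq', Finset.mem_univ, if_true, Pi.zero_apply]
      rw [show ∑ i', P a' i' * P i' i = (P * P) a' i from (Matrix.mul_apply).symm, h2, sub_self]
    have hmem : (ptraceB ρ) *ᵥ y ∈ LinearMap.range (ptraceB ρ).mulVecLin :=
      ⟨y, rfl⟩
    rw [← hrange] at hmem
    obtain ⟨z, hz⟩ := hmem
    have hx : star y ⬝ᵥ (ptraceB ρ) *ᵥ y = 0 := by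
      rw [← hz, Matrix.mulVecLin_apply, Matrix.dotProduct_mulVec]
      have hsv : star y ᵥ* P = star (P *ᵥ y) := by
        rw [Matrix.star_mulVec, hP.eq]
      rw [hsv, hPy]
      simp
    have := key_ptrace hpsd y hx j
    have hcolv : (ρ * ((1 : Matrix (Fin m × Fin n) (Fin m × Fin n) ℂ)
        - P ⊗ₖ (1 : Matrix (Fin n) (Fin n) ℂ))) a (i, j)
        = (ρ *ᵥ fun p => if p.2 = j then y p.1 else 0) a := by
      rw [← hcol]
      simp [Matrix.mul_apply, mulVec, dotProduct]
    rw [hcolv, this]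
    rfl
  rw [mul_sub, mul_one, sub_eq_zero] at main
  exact main.symm

lemma kron_herm {m n : ℕ} {P : Matrix (Fin m) (Fin m) ℂ} (hP : P.IsHermitian) :
    (P ⊗ₖ (1 : Matrix (Fin n) (Fin n) ℂ)).IsHermitian := by
  ext p q
  have h1 : (starRingEnd ℂ) (P q.1 p.1) = P p.1 q.1 := congrFun (congrFun hP.eq p.1) q.1
  by_cases h : p.2 = q.2
  · simp [conjTranspose_apply, one_apply, h, h1]
  · have h' : ¬q.2 = p.2 := fun hh => h hh.symm
    simp [conjTranspose_apply, one_apply, h, h']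

/-- For bipartite density matrices whose `A`-marginals have pairwise orthogonal
ranges, the projections `P_s` onto the ranges of the marginals form a perfectly
discriminating instrument: `(P_s ⊗ 1) ρ_{s'} (P_s ⊗ 1) = δ_{s s'} ρ_{s'}`. -/
theorem orthogonal_marginals_discrimination {m n N : ℕ}
    (ρ : Fin N → Matrix (Fin m × Fin n) (Fin m × Fin n) ℂ)
    (hpsd : ∀ s, (ρ s).PosSemidef) (htr : ∀ s, (ρ s).trace = 1)
    (horth : ∀ s t, s ≠ t → ∀ x y : Fin m → ℂ,
      star ((ptraceB (ρ s)).mulVec x) ⬝ᵥ (ptraceB (ρ t)).mulVec y = 0)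
    (P : Fin N → Matrix (Fin m) (Fin m) ℂ)
    (hP : ∀ s, (P s).IsHermitian) (hPP : ∀ s, P s * P s = P s)
    (hrange : ∀ s, LinearMap.range (P s).mulVecLin =
      LinearMap.range (ptraceB (ρ s)).mulVecLin) :
    ∀ s s' : Fin N,
      (P s ⊗ₖ (1 : Matrix (Fin n) (Fin n) ℂ)) * ρ s' * (P s ⊗ₖ (1 : Matrix (Fin n) (Fin n) ℂ)) =
        if s = s' then ρ s' else 0 := by
  have habs : ∀ s, ρ s * (P s ⊗ₖ (1 : Matrix (Fin n) (Fin n) ℂ)) = ρ s :=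
    fun s => absorb (hpsd s) (hP s) (hPP s) (hrange s)
  have habs' : ∀ s, (P s ⊗ₖ (1 : Matrix (Fin n) (Fin n) ℂ)) * ρ s = ρ s := by
    intro s
    have h := congrArg Matrix.conjTranspose (habs s)
    rwa [Matrix.conjTranspose_mul, (kron_herm (hP s)).eq, (hpsd s).1.eq] at h
  -- orthogonality of the projections
  have hPst : ∀ s t, s ≠ t → P s * P t = 0 := by
    intro s t hst
    ext a b
    set w : Fin m → ℂ := fun c => P t c b with hw
    have hwmem : w ∈ LinearMap.range (ptraceB (ρ t)).mulVecLin := by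
      rw [← hrange t]
      refine ⟨Pi.single b 1, ?_⟩
      funext c
      simp [Matrix.mulVecLin_apply, Matrix.mulVec_single, hw]
    obtain ⟨u, hu⟩ := hwmem
    have hPw_mem : P s *ᵥ w ∈ LinearMap.range (ptraceB (ρ s)).mulVecLin := by
      rw [← hrange s]; exact ⟨w, rfl⟩
    obtain ⟨u', hu'⟩ := hPw_mem
    have hzero : star (P s *ᵥ w) ⬝ᵥ (P s *ᵥ w) = 0 := by
      have h1 : star (P s *ᵥ w) = star w ᵥ* P s := by
        rw [Matrix.star_mulVec, (hP s).eq]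
      calc star (P s *ᵥ w) ⬝ᵥ (P s *ᵥ w)
          = star w ⬝ᵥ ((P s * P s) *ᵥ w) := by
            rw [h1, ← Matrix.dotProduct_mulVec, Matrix.mulVec_mulVec]
        _ = star w ⬝ᵥ (P s *ᵥ w) := by rw [hPP s]
        _ = 0 := by
            have h2 : ptraceB (ρ s) *ᵥ u' = P s *ᵥ w := by
              simpa [Matrix.mulVecLin_apply] using hu'
            have h3 : ptraceB (ρ t) *ᵥ u = w := by
              simpa [Matrix.mulVecLin_apply] using hu
            rw [← h2, ← h3]
            exact horth t s (Ne.symm hst) u u'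
    have hPw : P s *ᵥ w = 0 := dotProduct_star_self_eq_zero.mp hzero
    have : (P s * P t) a b = (P s *ᵥ w) a := by
      simp [Matrix.mul_apply, mulVec, dotProduct, hw]
    rw [this, hPw]
    rfl
  intro s s'
  by_cases h : s = s'
  · subst h
    rw [if_pos rfl, habs' s, habs s]
  · rw [if_neg h]
    have hQQ : (P s ⊗ₖ (1 : Matrix (Fin n) (Fin n) ℂ)) * (P s' ⊗ₖ (1 : Matrix (Fin n) (Fin n) ℂ))
        = 0 := by
      rw [← Matrix.mul_kronecker_mul, hPst s s' h, Matrix.zero_kronecker]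
    rw [← habs' s']
    simp only [← Matrix.mul_assoc]
    rw [hQQ]
    simp
end
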